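/- Let J be a set, let Sym(J) be the group of bijections of J equipped with the topology of pointwise convergence (the subspace topology from the product J^J with J discrete), and let Sym_ω(J) be the subgroup of permutations σ whose support {x ∈ J : σ(x) ≠ x} is countable. For each countable D ⊆ J put G_D = {σ ∈ Sym(J) : supp(σ) ⊆ D} with the subspace topology. Then the colimit space topology on Sym_ω(J) = ⋃_{D ∈ [J]^{≤ω}} G_D (the finest topology making each inclusion G_D → Sym_ω(J) continuous) coincides with the topology of pointwise convergence; in particular it is a group topology. -/

import Mathlib

open TopologicalSpace

variable (J : Type*)

/-- The topology of pointwise convergence on `Sym(J) = Equiv.Perm J`: the subspace topology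
from the product `J^J` where `J` carries the discrete topology. -/
instance instPermPointwiseTopology : TopologicalSpace (Equiv.Perm J) :=
  TopologicalSpace.induced (fun σ => (σ : J → J))
    (@Pi.topologicalSpace J (fun _ => J) (fun _ => ⊥))

/-- The subgroup `Sym_ω(J)` of permutations with countable support. -/
def symOmega : Subgroup (Equiv.Perm J) where
  carrier := {σ | {x | σ x ≠ x}.Countable}
  one_mem' := by
    show ({x | (1 : Equiv.Perm J) x ≠ x}).Countable
    have : {x | (1 : Equiv.Perm J) x ≠ x} = ∅ := by ext x; simp
    rw [this]
    exact Set.countable_empty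
  mul_mem' := by
    intro a b ha hb
    refine Set.Countable.mono ?_ (ha.union hb)
    intro x hx
    by_contra hc
    simp only [Set.mem_union, Set.mem_setOf_eq, not_or, not_not] at hc
    exact hx (by simp [Equiv.Perm.mul_apply, hc.1, hc.2])
  inv_mem' := by
    intro a ha
    refine Set.Countable.mono ?_ ha
    intro x hx
    simp only [Set.mem_setOf_eq] at hx ⊢
    intro h
    exact hx (((congrArg (⇑a⁻¹) h).symm.trans (by simp)))
  
/-- For a countable `D ⊆ J`, the set of permutations with support contained in `D`. -/
def permPiece (D : Set J) : Set (Equiv.Perm J) := {σ | ∀ x ∉ D, σ x = x}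

theorem permPiece_subset (D : Set J) (hD : D.Countable) :
    permPiece J D ⊆ (symOmega J : Set (Equiv.Perm J)) := fun σ hσ =>
  Set.Countable.mono (fun x hx => by by_contra hc; exact hx (hσ x hc)) hD

/-!
If `U` is open in every `G_D` and `σ ∈ U` had no neighbourhood `{τ | τ = σ on F}` (`F` finite)
inside `U`, pick for every finite `F` a witness `t F ∉ U` agreeing with `σ` on `F`. Closing
`supp σ` under `F ↦ supp (t F)` gives a countable `D`, and openness of `U` in `G_D` yields a
finite `I` such that every `τ ∈ G_D` agreeing with `σ` on `I` lies in `U`. But `t (I ∩ D)` is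
such a `τ`, because off `D` both it and `σ` are the identity. Hence the colimit topology is the
pointwise one, and the group topology is inherited from `Sym(J)`.
-/

open Filter Function Set Topology

theorem Set.Countable.exists_superset_closed_finset {α : Type*} {E : Set α} (hE : E.Countable)
    (g : Finset α → Set α) (hg : ∀ F, (g F).Countable) :
    ∃ D, E ⊆ D ∧ D.Countable ∧ ∀ F : Finset α, ↑F ⊆ D → g F ⊆ D := by
  let step : Set α → Set α := fun A => A ∪ ⋃ (F : Finset α) (_ : ↑F ⊆ A), g F
  have countable_step {A : Set α} (hA : A.Countable) : (step A).Countable := by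
    have hFin : {F : Finset α | ↑F ⊆ A}.Countable :=
      ((countable_ofPred_finite_subset hA).preimage Finset.coe_injective).mono
        fun F hF => show (F : Set α).Finite ∧ ↑F ⊆ A from ⟨F.finite_toSet, hF⟩
    exact hA.union (hFin.biUnion fun F _ => hg F)
  let A : ℕ → Set α := fun n => step^[n] E
  have hA_succ (n : ℕ) : A (n + 1) = step (A n) := iterate_succ_apply' step n E
  have hA_mono : Monotone A := monotone_nat_of_le_succ fun n => by
    rw [hA_succ]; exact subset_union_left
  refine ⟨⋃ n, A n, subset_iUnion A 0, countable_iUnion fun n => ?_, fun F hF => ?_⟩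
  · induction n with
    | zero => exact hE
    | succ n ih => rw [hA_succ]; exact countable_step ih
  · obtain ⟨n, hn⟩ := hA_mono.directed_le.exists_mem_subset_of_finset_subset_biUnion hF
    calc g F ⊆ ⋃ (G : Finset α) (_ : ↑G ⊆ A n), g G :=
          subset_iUnion₂ (s := fun G _ => g G) F hn
      _ ⊆ step (A n) := subset_union_right
      _ = A (n + 1) := (hA_succ n).symm
      _ ⊆ ⋃ n, A n := subset_iUnion A (n + 1)

namespace Equiv.Perm

variable {J}

theorem isOpen_setOf_apply_eq (x y : J) : IsOpen {π : Perm J | π x = y} := by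
  let : TopologicalSpace J := ⊥
  have : DiscreteTopology J := ⟨rfl⟩
  exact isOpen_induced ((isOpen_discrete {y}).preimage (continuous_apply (A := fun _ : J => J) x))

theorem continuous_iff_isOpen_setOf_apply_eq {X : Type*} [TopologicalSpace X] {f : X → Perm J} :
    Continuous f ↔ ∀ x y, IsOpen {a | f a x = y} := by
  let : TopologicalSpace J := ⊥
  have : DiscreteTopology J := ⟨rfl⟩
  rw [continuous_induced_rng, continuous_pi_iff]
  exact forall_congr' fun x => continuous_discrete_rng

instance : IsTopologicalGroup (Perm J) where
  continuous_mul := continuous_iff_isOpen_setOf_apply_eq.2 fun x y => by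
    have : {p : Perm J × Perm J | (p.1 * p.2) x = y} =
        ⋃ z, {π | π z = y} ×ˢ {π | π x = z} := by
      ext p; simp
    rw [this]
    exact isOpen_iUnion fun z => (isOpen_setOf_apply_eq z y).prod (isOpen_setOf_apply_eq x z)
  continuous_inv := continuous_iff_isOpen_setOf_apply_eq.2 fun x y => by
    simpa only [inv_eq_iff_eq, eq_comm (a := x)] using isOpen_setOf_apply_eq y x

theorem nhds_basis_eqOn (σ : Perm J) :
    (𝓝 σ).HasBasis Set.Finite fun I => {τ | EqOn τ σ I} := by
  let : TopologicalSpace J := ⊥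
  have : DiscreteTopology J := ⟨rfl⟩
  rw [nhds_induced, nhds_pi]
  simp only [nhds_discrete]
  exact (hasBasis_pi_pure _).comap _

theorem isOpen_subtype_iff {S : Set (Perm J)} {U : Set S} :
    IsOpen U ↔ ∀ σ ∈ U, ∃ I : Set J, I.Finite ∧
      ∀ τ : S, EqOn (τ : Perm J) (σ : Perm J) I → τ ∈ U := by
  simp only [isOpen_iff_mem_nhds, nhds_subtype, ((nhds_basis_eqOn _).comap _).mem_iff]
  rfl

end Equiv.Perm

section

variable {J}

theorem mem_permPiece_iff {D : Set J} {σ : Equiv.Perm J} :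
    σ ∈ permPiece J D ↔ {x | σ x ≠ x} ⊆ D :=
  forall_congr' fun _ => not_imp_comm

theorem Set.EqOn.of_inter_of_mem_permPiece {D I : Set J} {σ τ : Equiv.Perm J}
    (h : EqOn σ τ (I ∩ D)) (hσ : σ ∈ permPiece J D) (hτ : τ ∈ permPiece J D) :
    EqOn σ τ I :=
  fun x hx => by
    by_cases hxD : x ∈ D
    · exact h ⟨hx, hxD⟩
    · rw [hσ x hxD, hτ x hxD]

theorem iUnion_permPiece_eq_symOmega :
    (⋃ (D : Set J) (_ : D.Countable), permPiece J D) = (symOmega J : Set (Equiv.Perm J)) :=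
  (iUnion₂_subset fun D hD => permPiece_subset J D hD).antisymm fun _ hσ =>
    mem_iUnion₂.2 ⟨_, hσ, mem_permPiece_iff.2 subset_rfl⟩

theorem isOpen_of_isOpen_preimage_inclusion_permPiece (U : Set (symOmega J))
    (hU : ∀ (D : Set J) (hD : D.Countable),
      IsOpen (inclusion (permPiece_subset J D hD) ⁻¹' U)) :
    IsOpen U := by
  refine Equiv.Perm.isOpen_subtype_iff.2 fun σ hσ => ?_
  by_contra! hcon
  choose t ht_eqOn ht_notMem using fun F : Finset J => hcon F F.finite_toSet
  obtain ⟨D, hσD, hDc, hD⟩ := Set.Countable.exists_superset_closed_finset σ.2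
    (fun F => {x | (t F : Equiv.Perm J) x ≠ x}) fun F => (t F).2
  have hσ_mem : (σ : Equiv.Perm J) ∈ permPiece J D := mem_permPiece_iff.2 hσD
  obtain ⟨I, hI, hIU⟩ := Equiv.Perm.isOpen_subtype_iff.1 (hU D hDc) ⟨σ, hσ_mem⟩ hσ
  let F : Finset J := (hI.inter_of_left D).toFinset
  have hF : (F : Set J) ⊆ D := by simp [F]
  have ht_mem : (t F : Equiv.Perm J) ∈ permPiece J D := mem_permPiece_iff.2 (hD F hF)
  refine ht_notMem F (hIU ⟨t F, ht_mem⟩ (.of_inter_of_mem_permPiece ?_ ht_mem hσ_mem))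
  simpa [F] using ht_eqOn F

end

/-- `Sym_ω(J)` is the union of the groups `G_D` of permutations supported in a
countable set `D`, and the colimit space topology on it (the finest topology making each
inclusion `G_D → Sym_ω(J)` continuous, i.e. the supremum of the coinduced topologies, where
each `G_D` carries the subspace topology) coincides with the topology of pointwise
convergence; in particular it is a group topology. -/
theorem colimit_symOmega :
    (⋃ (D : Set J) (_ : D.Countable), permPiece J D) = (symOmega J : Set (Equiv.Perm J)) ∧
      (⨆ (D : Set J) (hD : D.Countable),
          TopologicalSpace.coinduced (Set.inclusion (permPiece_subset J D hD))
            (inferInstance : TopologicalSpace (permPiece J D)))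
        = (inferInstance : TopologicalSpace (symOmega J)) ∧
      @IsTopologicalGroup (symOmega J)
        (⨆ (D : Set J) (hD : D.Countable),
          TopologicalSpace.coinduced (Set.inclusion (permPiece_subset J D hD))
            (inferInstance : TopologicalSpace (permPiece J D))) _ := by
  have colimit_eq : (⨆ (D : Set J) (hD : D.Countable),
      TopologicalSpace.coinduced (Set.inclusion (permPiece_subset J D hD))
        (inferInstance : TopologicalSpace (permPiece J D)))
      = (inferInstance : TopologicalSpace (symOmega J)) := by
    refine le_antisymm (iSup₂_le fun D hD => (continuous_inclusion _).coinduced_le) fun U hU => ?_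
    simp only [isOpen_iSup_iff, isOpen_coinduced] at hU
    exact isOpen_of_isOpen_preimage_inclusion_permPiece U hU
  refine ⟨iUnion_permPiece_eq_symOmega, colimit_eq, ?_⟩
  rw [colimit_eq]
  infer_instance
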